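/- For every real p > 1, the function Γ_p(x) = 1 − ((x^p + 1 + (1 − x)^p)/2)^{1/p} is strictly increasing on the open interval (0, 1/2); equivalently, for all reals a, b with 0 < a < b < 1/2, ((a^p + 1 + (1 − a)^p)/2)^{1/p} > ((b^p + 1 + (1 − b)^p)/2)^{1/p}. Consequently, the Minkowski similarity measure S^(p)(I₁, I₂) = 1 − d_M^(p)(I₁, I₂) violates the similarity axiom (S4): for the singleton-universe IFSs I₁ = ⟨0,1⟩, I₂ = ⟨a,0⟩, I₃ = ⟨b,0⟩ with 0 < a < b < 1/2, one has I₁ ⊂ I₂ ⊂ I₃ yet S^(p)(I₁, I₂) < S^(p)(I₁, I₃). -/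

import Mathlib

/-- Indeterminacy degree `π_α = 1 - μ_α - ν_α`. -/
def indet (p : ℝ × ℝ) : ℝ := 1 - p.1 - p.2

/-- Atanassov's partial order on IFVs. -/
def atanassovLE (a b : ℝ × ℝ) : Prop := a.1 ≤ b.1 ∧ b.2 ≤ a.2

/-- The normalized Minkowski distance (singleton universe) with exponent `p`. -/
noncomputable def dMink (p : ℝ) (a b : ℝ × ℝ) : ℝ :=
  ((|a.1 - b.1| ^ p + |a.2 - b.2| ^ p + |indet a - indet b| ^ p) / 2) ^ (1 / p)

/-- The Minkowski similarity measure `S^(p) = 1 - d_M^(p)`. -/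
noncomputable def SMink (p : ℝ) (a b : ℝ × ℝ) : ℝ := 1 - dMink p a b

lemma key_sum_lt (p : ℝ) (hp : 1 < p) {a b : ℝ} (ha : 0 < a) (hab : a < b)
    (hb : b < 1 / 2) : b ^ p + (1 - b) ^ p < a ^ p + (1 - a) ^ p := by
  have hd : (0 : ℝ) < 1 - 2 * a := by nlinarith
  set t : ℝ := (1 - a - b) / (1 - 2 * a) with ht
  set s : ℝ := (b - a) / (1 - 2 * a) with hs
  have htpos : 0 < t := div_pos (by nlinarith) hd
  have hspos : 0 < s := div_pos (by linarith) hd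
  have hts : t + s = 1 := by rw [ht, hs, ← add_div, div_eq_one_iff_eq hd.ne']; ring
  have hne : a ≠ 1 - a := by intro h; nlinarith
  have hC := strictConvexOn_rpow hp
  have h1 := hC.2 (le_of_lt ha : a ∈ Set.Ici (0:ℝ)) (by simp; nlinarith : (1 - a) ∈ Set.Ici (0:ℝ))
    hne htpos hspos hts
  have h2 := hC.2 (le_of_lt ha : a ∈ Set.Ici (0:ℝ)) (by simp; nlinarith : (1 - a) ∈ Set.Ici (0:ℝ))
    hne hspos htpos (by linarith)
  have e1 : t • a + s • (1 - a) = b := by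
    simp only [smul_eq_mul, ht, hs]; rw [div_mul_eq_mul_div, div_mul_eq_mul_div, ← add_div, div_eq_iff hd.ne']; ring
  have e2 : s • a + t • (1 - a) = 1 - b := by
    simp only [smul_eq_mul, ht, hs]; rw [div_mul_eq_mul_div, div_mul_eq_mul_div, ← add_div, div_eq_iff hd.ne']; ring
  rw [e1] at h1
  rw [e2] at h2
  have hsum := add_lt_add h1 h2
  have hr : t • a ^ p + s • (1 - a) ^ p + (s • a ^ p + t • (1 - a) ^ p)
      = (t + s) * (a ^ p + (1 - a) ^ p) := by simp [smul_eq_mul]; ring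
  rw [hr, hts, one_mul] at hsum
  linarith

lemma key_rpow (p : ℝ) (hp : 1 < p) {a b : ℝ} (ha : 0 < a) (hab : a < b)
    (hb : b < 1 / 2) :
    ((b ^ p + 1 + (1 - b) ^ p) / 2) ^ (1 / p) <
      ((a ^ p + 1 + (1 - a) ^ p) / 2) ^ (1 / p) := by
  have h := key_sum_lt p hp ha hab hb
  have hbp : (0:ℝ) ≤ b ^ p := Real.rpow_nonneg (by linarith) p
  have h1bp : (0:ℝ) ≤ (1 - b) ^ p := Real.rpow_nonneg (by linarith) p
  exact Real.rpow_lt_rpow (by positivity) (by linarith) (by positivity)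

/-- For every `p > 1`, the function `Γ_p(x) = 1 - ((x^p + 1 + (1-x)^p)/2)^{1/p}` is
strictly increasing on `(0, 1/2)`; consequently, the Minkowski similarity measure
violates axiom (S4): for `I₁ = ⟨0,1⟩`, `I₂ = ⟨a,0⟩`, `I₃ = ⟨b,0⟩` with
`0 < a < b < 1/2` one has `I₁ ⊂ I₂ ⊂ I₃` yet `S^(p)(I₁, I₂) < S^(p)(I₁, I₃)`. -/
theorem minkowski_similarity_not_S4 (p : ℝ) (hp : 1 < p) :
    (∀ a b : ℝ, 0 < a → a < b → b < 1 / 2 →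
      ((a ^ p + 1 + (1 - a) ^ p) / 2) ^ (1 / p) >
        ((b ^ p + 1 + (1 - b) ^ p) / 2) ^ (1 / p)) ∧
    (∀ a b : ℝ, 0 < a → a < b → b < 1 / 2 →
      atanassovLE ((0 : ℝ), (1 : ℝ)) ((a, 0) : ℝ × ℝ) ∧
      atanassovLE ((a, 0) : ℝ × ℝ) ((b, 0) : ℝ × ℝ) ∧
      SMink p ((0 : ℝ), (1 : ℝ)) ((a, 0) : ℝ × ℝ) <
        SMink p ((0 : ℝ), (1 : ℝ)) ((b, 0) : ℝ × ℝ)) := by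
  constructor
  · intro a b ha hab hb
    exact key_rpow p hp ha hab hb
  · intro a b ha hab hb
    refine ⟨⟨le_of_lt ha, by norm_num⟩, ⟨le_of_lt hab, le_refl 0⟩, ?_⟩
    have hd : ∀ x : ℝ, 0 < x → x < 1/2 →
        dMink p ((0 : ℝ), (1 : ℝ)) ((x, 0) : ℝ × ℝ)
          = ((x ^ p + 1 + (1 - x) ^ p) / 2) ^ (1 / p) := by
      intro x hx hx2
      simp only [dMink, indet]
      rw [abs_of_nonpos (by linarith), abs_of_nonneg (by norm_num),
        abs_of_nonpos (by norm_num; linarith)]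
      norm_num
    simp only [SMink, hd a ha (lt_trans hab hb), hd b (lt_trans ha hab) hb]
    have := key_rpow p hp ha hab hb
    linarith
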